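/- Suppose Q̂(p) = e^{pΛ_N}(I_d − Σ A_j e^{-pΛ_j} − ∫₀^{Λ_N} g(s)e^{-ps}ds) and B ∈ ℝ^{d×m} satisfy: for every p ∈ ℂ and every matrix F in the closure of the range of Q̂, rank[F, B] = d. Then there exists α > 0 such that for all p ∈ ℂ and all g ∈ ℂ^d with ‖g‖ = 1, ‖gᵀ Q̂(p)‖ + ‖gᵀ B‖ ≥ α. -/

import Mathlib

open MeasureTheory Filter

attribute [local instance] Matrix.linftyOpNormedAddCommGroup Matrix.linftyOpNormedRing

noncomputable section

namespace RankCondAux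

attribute [local instance] Matrix.linftyOpNormedSpace

/-- smul pulls out of vecMul on the matrix side. -/
lemma vecMul_smul_matrix {d : ℕ} (v : Fin d → ℂ) (c : ℂ) (M : Matrix (Fin d) (Fin d) ℂ) :
    Matrix.vecMul v (c • M) = c • Matrix.vecMul v M := by
  ext j
  simp [Matrix.vecMul, dotProduct, Finset.mul_sum]
  congr 1; ext i; ring

lemma entry_norm_to_matrix_norm {d e : ℕ} (M : Matrix (Fin d) (Fin e) ℂ) {c : ℝ}
    (hc : 0 ≤ c) (h : ∀ i j, ‖M i j‖ ≤ c) : ‖M‖ ≤ e * c := by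
  have hb : (0:ℝ) ≤ (e:ℝ) * c := by positivity
  rw [Matrix.linfty_opNorm_def, ← Real.coe_toNNReal _ hb, NNReal.coe_le_coe]
  apply Finset.sup_le
  intro i _
  rw [← NNReal.coe_le_coe, Real.coe_toNNReal _ hb]
  push_cast
  calc (∑ j, (‖M i j‖₊ : ℝ)) ≤ ∑ _j : Fin e, c := by
        apply Finset.sum_le_sum; intro j _; exact h i j
    _ = (e:ℝ) * c := by simp [mul_comm]

/-- The rank condition kills common left kernels. -/
lemma left_kernel_triv {d m : ℕ} (F : Matrix (Fin d) (Fin d) ℂ)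
    (B' : Matrix (Fin d) (Fin m) ℂ)
    (h : (Matrix.fromCols F B').rank = d) (v : Fin d → ℂ)
    (h1 : Matrix.vecMul v F = 0) (h2 : Matrix.vecMul v B' = 0) : v = 0 := by
  set M := Matrix.fromCols F B' with hM
  have hvM : Matrix.vecMul v M = 0 := by
    rw [hM, Matrix.vecMul_fromCols, h1, h2]
    ext (i | i) <;> rfl
  have hker : v ∈ LinearMap.ker (Matrix.mulVecLin M.transpose) := by
    rw [LinearMap.mem_ker, Matrix.mulVecLin_apply, Matrix.mulVec_transpose, hvM]
  have hrk : M.transpose.rank = d := by rw [Matrix.rank_transpose]; exact h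
  have hrn := LinearMap.finrank_range_add_finrank_ker (Matrix.mulVecLin M.transpose)
  rw [show Module.finrank ℂ (LinearMap.range (Matrix.mulVecLin M.transpose)) = M.transpose.rank from rfl, hrk] at hrn
  have hdom : Module.finrank ℂ (Fin d → ℂ) = d := by simp
  rw [hdom] at hrn
  have hker0 : Module.finrank ℂ (LinearMap.ker (Matrix.mulVecLin M.transpose)) = 0 := by omega
  have : LinearMap.ker (Matrix.mulVecLin M.transpose) = ⊥ := Submodule.finrank_eq_zero.mp hker0
  rw [this, Submodule.mem_bot] at hker
  exact hker

/-- Minimum of the Hautus quantity over a compact set of matrices times the unit sphere. -/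
lemma exists_min_on_compact {d m : ℕ} (hd : 0 < d)
    (B' : Matrix (Fin d) (Fin m) ℂ) (S : Set (Matrix (Fin d) (Fin d) ℂ))
    (hS : IsCompact S)
    (hpos : ∀ F ∈ S, ∀ v : Fin d → ℂ, ‖v‖ = 1 →
      0 < ‖Matrix.vecMul v F‖ + ‖Matrix.vecMul v B'‖) :
    ∃ α > (0:ℝ), ∀ F ∈ S, ∀ v : Fin d → ℂ, ‖v‖ = 1 →
      α ≤ ‖Matrix.vecMul v F‖ + ‖Matrix.vecMul v B'‖ := by
  rcases S.eq_empty_or_nonempty with hSe | ⟨F₀, hF₀⟩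
  · exact ⟨1, one_pos, by simp [hSe]⟩
  haveI : Nonempty (Fin d) := ⟨⟨0, hd⟩⟩
  -- a unit vector
  set v₀ : Fin d → ℂ := Pi.single ⟨0, hd⟩ 1 with hv₀
  have hv₀n : ‖v₀‖ = 1 := by
    rw [hv₀, Pi.norm_single]; norm_num
  set K : Set (Matrix (Fin d) (Fin d) ℂ × (Fin d → ℂ)) :=
    S ×ˢ Metric.sphere (0 : Fin d → ℂ) 1 with hK
  have hKc : IsCompact K := hS.prod (isCompact_sphere 0 1)
  have hKne : K.Nonempty := ⟨⟨F₀, v₀⟩, hF₀, by simpa using hv₀n⟩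
  have hcont : Continuous fun q : Matrix (Fin d) (Fin d) ℂ × (Fin d → ℂ) =>
      ‖Matrix.vecMul q.2 q.1‖ + ‖Matrix.vecMul q.2 B'‖ := by
    have h1 : Continuous fun q : Matrix (Fin d) (Fin d) ℂ × (Fin d → ℂ) =>
        Matrix.vecMul q.2 q.1 := by
      apply continuous_pi; intro j
      simp only [Matrix.vecMul, dotProduct]
      apply continuous_finset_sum; intro i _
      exact ((continuous_apply i).comp continuous_snd).mul
        ((continuous_apply j).comp ((continuous_apply i).comp continuous_fst))
    have h2 : Continuous fun q : Matrix (Fin d) (Fin d) ℂ × (Fin d → ℂ) =>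
        Matrix.vecMul q.2 B' := by
      apply continuous_pi; intro j
      simp only [Matrix.vecMul, dotProduct]
      apply continuous_finset_sum; intro i _
      exact ((continuous_apply i).comp continuous_snd).mul continuous_const
    exact (h1.norm.add h2.norm)
  obtain ⟨q₀, hq₀K, hq₀min⟩ := hKc.exists_isMinOn hKne hcont.continuousOn
  have hq₀S : q₀.1 ∈ S := hq₀K.1
  have hq₀s : ‖q₀.2‖ = 1 := by
    have := hq₀K.2; simpa [Metric.mem_sphere] using this
  refine ⟨‖Matrix.vecMul q₀.2 q₀.1‖ + ‖Matrix.vecMul q₀.2 B'‖,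
    hpos q₀.1 hq₀S q₀.2 hq₀s, fun F hF v hv => ?_⟩
  exact isMinOn_iff.mp hq₀min (F, v) (Set.mk_mem_prod hF (by simpa [Metric.mem_sphere] using hv))

end RankCondAux

open RankCondAux

set_option maxHeartbeats 4000000 in
/-- If for every matrix `F` in the closure of the range of `Q̂` the
concatenated matrix `[F, B]` has full rank `d`, then the Hautus-type quantity is uniformly
bounded below: there is `α > 0` with `‖gᵀ Q̂(p)‖ + ‖gᵀ B‖ ≥ α` for all `p ∈ ℂ` and all unit
vectors `g ∈ ℂ^d`. -/
theorem rank_condition_implies_uniform_lower_bound {d m N : ℕ}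
    (Λ : Fin N → ℝ) (ΛN : ℝ)
    (hΛpos : ∀ j, 0 < Λ j) (hΛmono : StrictMono Λ) (hΛle : ∀ j, Λ j ≤ ΛN)
    (A : Fin N → Matrix (Fin d) (Fin d) ℝ) (B : Matrix (Fin d) (Fin m) ℝ)
    (g : ℝ → Fin d → Fin d → ℝ)
    (hgmeas : ∀ i j, Measurable fun s => g s i j)
    (hgbdd : ∃ C : ℝ, ∀ s i j, |g s i j| ≤ C)
    (Qhat : ℂ → Matrix (Fin d) (Fin d) ℂ)
    (hQhat : Qhat = fun p => Matrix.of fun i j =>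
      Complex.exp (p * ΛN) * (((if i = j then 1 else 0) : ℂ)
        - ∑ k, (A k i j : ℂ) * Complex.exp (-(p * Λ k))
        - ∫ s in Set.Icc (0 : ℝ) ΛN, (g s i j : ℂ) * Complex.exp (-(p * s))))
    (hrank : ∀ F ∈ closure (Set.range Qhat),
      (Matrix.fromCols F (B.map fun x => (x : ℂ))).rank = d) :
    ∃ α > (0 : ℝ), ∀ (p : ℂ) (v : Fin d → ℂ), ‖v‖ = 1 →
      α ≤ ‖Matrix.vecMul v (Qhat p)‖ + ‖Matrix.vecMul v (B.map fun x => (x : ℂ))‖ := by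
  classical
  haveI : NormedSpace ℂ (Matrix (Fin d) (Fin d) ℂ) := Matrix.linftyOpNormedSpace
  haveI : ProperSpace (Matrix (Fin d) (Fin d) ℂ) :=
    @FiniteDimensional.proper ℂ _ (Matrix (Fin d) (Fin d) ℂ) _
      Matrix.linftyOpNormedSpace _ (by exact Matrix.finiteDimensional)
  obtain ⟨C₀, hC₀⟩ := hgbdd
  set C : ℝ := max C₀ 0 with hCdef
  have hCnn : 0 ≤ C := le_max_right _ _
  have hgC : ∀ s i j, |g s i j| ≤ C := fun s i j => (hC₀ s i j).trans (le_max_left _ _)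
  set B' : Matrix (Fin d) (Fin m) ℂ := B.map (fun x => (x : ℂ)) with hB'
  rcases Nat.eq_zero_or_pos d with hd0 | hd
  · refine ⟨1, one_pos, fun p v hv => ?_⟩
    exfalso
    subst hd0
    have hv0 : v = 0 := funext fun i => i.elim0
    rw [hv0, norm_zero] at hv
    norm_num at hv
  -- general integrability of the kernel
  have hmeasf : ∀ (p : ℂ) (i j : Fin d),
      AEStronglyMeasurable (fun s : ℝ => (g s i j : ℂ) * Complex.exp (-(p * s))) volume := by
    intro p i j
    apply Measurable.aestronglyMeasurable
    exact (Complex.measurable_ofReal.comp (hgmeas i j)).mul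
      (Complex.continuous_exp.measurable.comp
        ((Complex.measurable_ofReal.const_mul p).neg))
  have hIccfin : volume (Set.Icc (0:ℝ) ΛN) ≠ ⊤ := (measure_Icc_lt_top).ne
  have hintf : ∀ (p : ℂ) (i j : Fin d),
      IntegrableOn (fun s : ℝ => (g s i j : ℂ) * Complex.exp (-(p * s)))
        (Set.Icc (0:ℝ) ΛN) volume := by
    intro p i j
    apply Measure.integrableOn_of_bounded (M := C * Real.exp (|p.re| * |ΛN|)) hIccfin
      (hmeasf p i j)
    rw [ae_restrict_iff' measurableSet_Icc]
    filter_upwards with s hs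
    rw [norm_mul]
    have h1 : ‖((g s i j : ℝ) : ℂ)‖ ≤ C := by
      rw [Complex.norm_real, Real.norm_eq_abs]; exact hgC s i j
    have h2 : ‖Complex.exp (-(p * s))‖ ≤ Real.exp (|p.re| * |ΛN|) := by
      rw [Complex.norm_exp]
      apply Real.exp_le_exp.mpr
      have : (-(p * (s:ℂ))).re = -(p.re * s) := by simp [Complex.mul_re]
      rw [this]
      calc -(p.re * s) ≤ |p.re * s| := neg_le_abs _
        _ = |p.re| * |s| := abs_mul _ _
        _ ≤ |p.re| * |ΛN| := by
            apply mul_le_mul_of_nonneg_left _ (abs_nonneg _)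
            rw [abs_le]
            constructor
            · calc -|ΛN| ≤ 0 := neg_nonpos_of_nonneg (abs_nonneg _)
                _ ≤ s := hs.1
            · exact hs.2.trans (le_abs_self _)
    exact mul_le_mul h1 h2 (norm_nonneg _) hCnn
  rcases le_or_gt ΛN 0 with hΛN0 | hΛNpos
  · -- degenerate case : `N = 0` and the integral vanishes
    have hint0 : ∀ (p : ℂ) (i j : Fin d),
        (∫ s in Set.Icc (0:ℝ) ΛN, (g s i j : ℂ) * Complex.exp (-(p * s))) = 0 := by
      intro p i j
      have hz : volume (Set.Icc (0:ℝ) ΛN) = 0 := by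
        rw [Real.volume_Icc]
        rw [ENNReal.ofReal_eq_zero]
        linarith
      rw [Measure.restrict_eq_zero.mpr hz, integral_zero_measure]
    have hN0 : N = 0 := by
      by_contra hN
      have h0 : 0 < N := Nat.pos_of_ne_zero hN
      have := (hΛpos ⟨0, h0⟩).trans_le (hΛle ⟨0, h0⟩)
      linarith
    have hQ : ∀ p, Qhat p = Complex.exp (p * ΛN) • (1 : Matrix (Fin d) (Fin d) ℂ) := by
      intro p
      rw [hQhat]
      ext i j
      subst hN0
      simp [hint0 p i j, Matrix.one_apply]
    rcases eq_or_lt_of_le hΛN0 with hΛNeq | hΛNlt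
    · -- ΛN = 0 : Qhat is constantly the identity
      refine ⟨1, one_pos, fun p v hv => ?_⟩
      have : Matrix.vecMul v (Qhat p) = v := by
        rw [hQ p, hΛNeq]
        simp [Matrix.vecMul_one]
      rw [this, hv]
      linarith [norm_nonneg (Matrix.vecMul v B')]
    · -- ΛN < 0 : `0` lies in the closure of the range
      have h0cl : (0 : Matrix (Fin d) (Fin d) ℂ) ∈ closure (Set.range Qhat) := by
        have htend : Tendsto (fun n : ℕ => Qhat n) atTop
            (nhds (0 : Matrix (Fin d) (Fin d) ℂ)) := by
          apply squeeze_zero_norm (a := fun n : ℕ => (d:ℝ) * Real.exp ((n:ℝ) * ΛN))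
          · intro n
            rw [hQ]
            apply entry_norm_to_matrix_norm _ (Real.exp_pos _).le
            intro i j
            have h1 : ‖Complex.exp ((n:ℂ) * (ΛN:ℂ))‖ = Real.exp ((n:ℝ) * ΛN) := by
              rw [Complex.norm_exp]
              congr 1
              simp [Complex.mul_re]
            calc ‖(Complex.exp ((n:ℂ) * ΛN) • (1 : Matrix (Fin d) (Fin d) ℂ)) i j‖
                = ‖Complex.exp ((n:ℂ) * ΛN)‖ * ‖(1 : Matrix (Fin d) (Fin d) ℂ) i j‖ := by
                  rw [Matrix.smul_apply, norm_smul]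
              _ ≤ Real.exp ((n:ℝ) * ΛN) * 1 := by
                  rw [h1]
                  apply mul_le_mul_of_nonneg_left _ (Real.exp_pos _).le
                  rw [Matrix.one_apply]
                  split <;> simp
              _ = Real.exp ((n:ℝ) * ΛN) := mul_one _
          · rw [show (0:ℝ) = (d:ℝ) * 0 by ring]
            apply Tendsto.const_mul
            apply Real.tendsto_exp_atBot.comp
            exact (tendsto_natCast_atTop_atTop (R := ℝ)).atTop_mul_const_of_neg hΛNlt
        exact mem_closure_of_tendsto htend (Eventually.of_forall fun n => Set.mem_range_self _)
      obtain ⟨α, hα, hmin⟩ := exists_min_on_compact hd B' {0} isCompact_singleton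
        (by
          intro F hF v hv
          rcases lt_or_ge 0 (‖Matrix.vecMul v F‖ + ‖Matrix.vecMul v B'‖) with h | h
          · exact h
          exfalso
          have h1 : Matrix.vecMul v F = 0 := by
            have := norm_nonneg (Matrix.vecMul v F)
            have := norm_nonneg (Matrix.vecMul v B')
            have : ‖Matrix.vecMul v F‖ = 0 := by linarith
            exact norm_eq_zero.mp this
          have h2 : Matrix.vecMul v B' = 0 := by
            have := norm_nonneg (Matrix.vecMul v F)
            have := norm_nonneg (Matrix.vecMul v B')
            have : ‖Matrix.vecMul v B'‖ = 0 := by linarith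
            exact norm_eq_zero.mp this
          have hF0 : F = 0 := hF
          have := left_kernel_triv F B' (by rw [hF0]; exact hrank 0 h0cl) v h1 h2
          rw [this] at hv
          simp at hv)
      refine ⟨α, hα, fun p v hv => ?_⟩
      have h1 := hmin 0 rfl v hv
      rw [Matrix.vecMul_zero] at h1
      simp only [norm_zero, zero_add] at h1
      have := norm_nonneg (Matrix.vecMul v (Qhat p))
      linarith
  · -- main case : ΛN > 0
    set Ka : Fin N → ℝ := fun k => ∑ i, ∑ j, |A k i j| with hKa
    have hKann : ∀ k, 0 ≤ Ka k := fun k =>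
      Finset.sum_nonneg fun i _ => Finset.sum_nonneg fun j _ => abs_nonneg _
    have hKage : ∀ k (i j : Fin d), |A k i j| ≤ Ka k := by
      intro k i j
      calc |A k i j| ≤ ∑ j', |A k i j'| :=
            Finset.single_le_sum (f := fun j' => |A k i j'|)
              (fun j' _ => abs_nonneg _) (Finset.mem_univ j)
        _ ≤ Ka k :=
            Finset.single_le_sum (f := fun i' => ∑ j', |A k i' j'|)
              (fun i' _ => Finset.sum_nonneg fun _ _ => abs_nonneg _) (Finset.mem_univ i)
    set φ : ℝ → ℝ := fun R => (∑ k, Ka k * Real.exp (-(R * Λ k))) + C / R with hφ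
    have hφ0 : Tendsto φ atTop (nhds 0) := by
      rw [show (0:ℝ) = (∑ _k : Fin N, (0:ℝ)) + 0 by simp]
      apply Tendsto.add
      · apply tendsto_finset_sum
        intro k _
        rw [show (0:ℝ) = Ka k * 0 by ring]
        apply Tendsto.const_mul
        apply Real.tendsto_exp_atBot.comp
        exact tendsto_neg_atTop_atBot.comp (tendsto_id.atTop_mul_const (hΛpos k))
      · exact tendsto_const_nhds.div_atTop tendsto_id
    obtain ⟨R, hR1, hRφ⟩ : ∃ R : ℝ, 1 ≤ R ∧ (d:ℝ) * φ R ≤ 1/2 := by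
      have h1 : Tendsto (fun R => (d:ℝ) * φ R) atTop (nhds ((d:ℝ) * 0)) := hφ0.const_mul _
      rw [mul_zero] at h1
      have h2 : ∀ᶠ R in atTop, (d:ℝ) * φ R < 1/2 := h1.eventually_lt_const (by norm_num)
      obtain ⟨R, hR⟩ := (h2.and (eventually_ge_atTop 1)).exists
      exact ⟨R, hR.2, hR.1.le⟩
    have hRpos : (0:ℝ) < R := by linarith
    set E : ℂ → Matrix (Fin d) (Fin d) ℂ := fun p => Matrix.of fun i j =>
      (∑ k, (A k i j : ℂ) * Complex.exp (-(p * Λ k)))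
        + ∫ s in Set.Icc (0:ℝ) ΛN, (g s i j : ℂ) * Complex.exp (-(p * s)) with hE
    have hQE : ∀ p, Qhat p = Complex.exp (p * ΛN) • ((1 : Matrix (Fin d) (Fin d) ℂ) - E p) := by
      intro p
      rw [hQhat]
      ext i j
      simp only [Matrix.of_apply, Matrix.smul_apply, Matrix.sub_apply, Matrix.one_apply, hE,
        smul_eq_mul]
      split <;> ring
    have hexpnorm : ∀ (z : ℂ) (t : ℝ), ‖Complex.exp (-(z * t))‖ = Real.exp (-(z.re * t)) := by
      intro z t
      rw [Complex.norm_exp]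
      congr 1
      simp [Complex.mul_re]
    have hcnorm : ∀ (z : ℂ) (t : ℝ), ‖Complex.exp (z * t)‖ = Real.exp (z.re * t) := by
      intro z t
      rw [Complex.norm_exp]
      congr 1
      simp [Complex.mul_re]
    have hexpint : ∀ a : ℝ, 0 < a → (∫ s in Set.Icc (0:ℝ) ΛN, Real.exp (-(a * s))) ≤ 1 / a := by
      intro a ha
      have heq : (∫ s in Set.Icc (0:ℝ) ΛN, Real.exp (-(a * s)))
          = ∫ s in (0:ℝ)..ΛN, Real.exp (-a * s) := by
        rw [MeasureTheory.integral_Icc_eq_integral_Ioc, ← intervalIntegral.integral_of_le hΛNpos.le]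
        congr 1
        ext s
        ring_nf
      rw [heq, intervalIntegral.integral_comp_mul_left Real.exp (show (-a) ≠ 0 by linarith),
        mul_zero, integral_exp, Real.exp_zero, smul_eq_mul]
      have h1 : 0 < Real.exp (-a * ΛN) := Real.exp_pos _
      have hai : 0 < a⁻¹ := inv_pos.2 ha
      rw [inv_neg, one_div]
      nlinarith [mul_nonneg hai.le h1.le]
    have hEb : ∀ p : ℂ, R ≤ p.re → ∀ i j, ‖E p i j‖ ≤ φ R := by
      intro p hp i j
      have hpre : 0 < p.re := lt_of_lt_of_le hRpos hp
      have hsum : ‖∑ k, (A k i j : ℂ) * Complex.exp (-(p * Λ k))‖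
          ≤ ∑ k, Ka k * Real.exp (-(R * Λ k)) := by
        calc ‖∑ k, (A k i j : ℂ) * Complex.exp (-(p * Λ k))‖
            ≤ ∑ k, ‖(A k i j : ℂ) * Complex.exp (-(p * Λ k))‖ := norm_sum_le _ _
          _ ≤ ∑ k, Ka k * Real.exp (-(R * Λ k)) := by
              apply Finset.sum_le_sum
              intro k _
              rw [norm_mul, Complex.norm_real, Real.norm_eq_abs, hexpnorm]
              apply mul_le_mul (hKage k i j) ?_ (Real.exp_pos _).le (hKann k)
              apply Real.exp_le_exp.mpr
              have := hΛpos k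
              nlinarith
      have hintb : ‖∫ s in Set.Icc (0:ℝ) ΛN, (g s i j : ℂ) * Complex.exp (-(p * s))‖ ≤ C / R := by
        have hcont : Continuous fun s : ℝ => C * Real.exp (-(p.re * s)) := by fun_prop
        calc ‖∫ s in Set.Icc (0:ℝ) ΛN, (g s i j : ℂ) * Complex.exp (-(p * s))‖
            ≤ ∫ s in Set.Icc (0:ℝ) ΛN, ‖(g s i j : ℂ) * Complex.exp (-(p * s))‖ :=
              norm_integral_le_integral_norm _
          _ ≤ ∫ s in Set.Icc (0:ℝ) ΛN, C * Real.exp (-(p.re * s)) := by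
              apply setIntegral_mono_on ((hintf p i j).norm) (hcont.integrableOn_Icc)
                measurableSet_Icc
              intro s _
              rw [norm_mul, Complex.norm_real, Real.norm_eq_abs, hexpnorm]
              exact mul_le_mul_of_nonneg_right (hgC s i j) (Real.exp_pos _).le
          _ = C * ∫ s in Set.Icc (0:ℝ) ΛN, Real.exp (-(p.re * s)) := by
              rw [MeasureTheory.integral_const_mul]
          _ ≤ C * (1 / p.re) := mul_le_mul_of_nonneg_left (hexpint p.re hpre) hCnn
          _ = C / p.re := by ring
          _ ≤ C / R := by gcongr
      calc ‖E p i j‖ ≤ ‖∑ k, (A k i j : ℂ) * Complex.exp (-(p * Λ k))‖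
            + ‖∫ s in Set.Icc (0:ℝ) ΛN, (g s i j : ℂ) * Complex.exp (-(p * s))‖ := by
            rw [hE]
            exact norm_add_le _ _
        _ ≤ (∑ k, Ka k * Real.exp (-(R * Λ k))) + C / R := add_le_add hsum hintb
        _ = φ R := rfl
    have hlow : ∀ p : ℂ, R ≤ p.re → ∀ v : Fin d → ℂ, ‖v‖ = 1 →
        1/2 ≤ ‖Matrix.vecMul v (Qhat p)‖ := by
      intro p hp v hv
      have hvE : ‖Matrix.vecMul v (E p)‖ ≤ 1/2 := by
        have hb : ∀ j, ‖Matrix.vecMul v (E p) j‖ ≤ (d:ℝ) * φ R := by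
          intro j
          have hvm : Matrix.vecMul v (E p) j = ∑ i, v i * E p i j := by
            simp [Matrix.vecMul, dotProduct]
          rw [hvm]
          calc ‖∑ i, v i * E p i j‖ ≤ ∑ i, ‖v i * E p i j‖ := norm_sum_le _ _
            _ ≤ ∑ _i : Fin d, 1 * φ R := by
                apply Finset.sum_le_sum
                intro i _
                rw [norm_mul]
                apply mul_le_mul ?_ (hEb p hp i j) (norm_nonneg _) zero_le_one
                calc ‖v i‖ ≤ ‖v‖ := norm_le_pi_norm v i
                  _ = 1 := hv
            _ = (d:ℝ) * φ R := by simp [mul_comm]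
        apply (pi_norm_le_iff_of_nonneg (by norm_num : (0:ℝ) ≤ 1/2)).2
        intro j
        exact (hb j).trans hRφ
      have hsplit : Matrix.vecMul v (Qhat p)
          = Complex.exp (p * ΛN) • (v - Matrix.vecMul v (E p)) := by
        rw [hQE p, vecMul_smul_matrix, Matrix.vecMul_sub, Matrix.vecMul_one]
      rw [hsplit, norm_smul]
      have h1 : (1:ℝ) ≤ ‖Complex.exp (p * ΛN)‖ := by
        rw [hcnorm]
        apply Real.one_le_exp
        nlinarith
      have h2 : 1/2 ≤ ‖v - Matrix.vecMul v (E p)‖ := by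
        have h3 := norm_sub_norm_le v (Matrix.vecMul v (E p))
        rw [hv] at h3
        linarith
      calc (1:ℝ)/2 = 1 * (1/2) := by ring
        _ ≤ ‖Complex.exp (p * ΛN)‖ * ‖v - Matrix.vecMul v (E p)‖ :=
            mul_le_mul h1 h2 (by norm_num) (norm_nonneg _)
    set M₀ : ℝ := Real.exp (R * ΛN) * (1 + (∑ k, Ka k) + C * ΛN) with hM₀
    have hM₀nn : 0 ≤ M₀ := by
      apply mul_nonneg (Real.exp_pos _).le
      have := Finset.sum_nonneg (fun k (_ : k ∈ Finset.univ) => hKann k)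
      nlinarith [mul_nonneg hCnn hΛNpos.le]
    have hbdd : ∀ p : ℂ, p.re ≤ R → ‖Qhat p‖ ≤ (d:ℝ) * M₀ := by
      intro p hp
      rw [hQhat]
      apply entry_norm_to_matrix_norm _ hM₀nn
      intro i j
      simp only [Matrix.of_apply]
      have hcont2 : Continuous fun s : ℝ =>
          Real.exp (p.re * ΛN) * (C * Real.exp (-(p.re * s))) := by fun_prop
      have hS : ‖∑ k, (A k i j : ℂ) * Complex.exp (-(p * Λ k))‖
          ≤ ∑ k, Ka k * Real.exp (-(p.re * Λ k)) := by
        calc ‖∑ k, (A k i j : ℂ) * Complex.exp (-(p * Λ k))‖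
            ≤ ∑ k, ‖(A k i j : ℂ) * Complex.exp (-(p * Λ k))‖ := norm_sum_le _ _
          _ ≤ ∑ k, Ka k * Real.exp (-(p.re * Λ k)) := by
              apply Finset.sum_le_sum
              intro k _
              rw [norm_mul, Complex.norm_real, Real.norm_eq_abs, hexpnorm]
              exact mul_le_mul_of_nonneg_right (hKage k i j) (Real.exp_pos _).le
      have hI : ‖∫ s in Set.Icc (0:ℝ) ΛN, (g s i j : ℂ) * Complex.exp (-(p * s))‖
          ≤ ∫ s in Set.Icc (0:ℝ) ΛN, C * Real.exp (-(p.re * s)) := by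
        calc ‖∫ s in Set.Icc (0:ℝ) ΛN, (g s i j : ℂ) * Complex.exp (-(p * s))‖
            ≤ ∫ s in Set.Icc (0:ℝ) ΛN, ‖(g s i j : ℂ) * Complex.exp (-(p * s))‖ :=
              norm_integral_le_integral_norm _
          _ ≤ ∫ s in Set.Icc (0:ℝ) ΛN, C * Real.exp (-(p.re * s)) := by
              apply setIntegral_mono_on ((hintf p i j).norm)
                ((by fun_prop : Continuous fun s : ℝ => C * Real.exp (-(p.re * s))).integrableOn_Icc)
                measurableSet_Icc
              intro s _
              rw [norm_mul, Complex.norm_real, Real.norm_eq_abs, hexpnorm]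
              exact mul_le_mul_of_nonneg_right (hgC s i j) (Real.exp_pos _).le
      have hIb : Real.exp (p.re * ΛN) * ∫ s in Set.Icc (0:ℝ) ΛN, C * Real.exp (-(p.re * s))
          ≤ C * ΛN * Real.exp (R * ΛN) := by
        rw [← MeasureTheory.integral_const_mul]
        calc ∫ s in Set.Icc (0:ℝ) ΛN, Real.exp (p.re * ΛN) * (C * Real.exp (-(p.re * s)))
            ≤ ∫ s in Set.Icc (0:ℝ) ΛN, C * Real.exp (R * ΛN) := by
              apply setIntegral_mono_on hcont2.integrableOn_Icc
                (integrableOn_const measure_Icc_lt_top.ne) measurableSet_Icc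
              intro s hs
              rw [mul_comm (Real.exp (p.re * ΛN)) _, mul_assoc, ← Real.exp_add]
              apply mul_le_mul_of_nonneg_left ?_ hCnn
              apply Real.exp_le_exp.mpr
              nlinarith [mul_nonneg (sub_nonneg.2 hp) (sub_nonneg.2 hs.2),
                mul_nonneg hRpos.le hs.1]
          _ = C * ΛN * Real.exp (R * ΛN) := by
              rw [MeasureTheory.setIntegral_const, Real.volume_real_Icc_of_le (by linarith : (0:ℝ) ≤ ΛN),
                smul_eq_mul]
              ring
      have hSb : Real.exp (p.re * ΛN) * ∑ k, Ka k * Real.exp (-(p.re * Λ k))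
          ≤ (∑ k, Ka k) * Real.exp (R * ΛN) := by
        rw [Finset.mul_sum, Finset.sum_mul]
        apply Finset.sum_le_sum
        intro k _
        rw [mul_comm (Real.exp (p.re * ΛN)) _, mul_assoc, ← Real.exp_add]
        apply mul_le_mul_of_nonneg_left ?_ (hKann k)
        apply Real.exp_le_exp.mpr
        have hk1 := hΛpos k
        have hk2 := hΛle k
        nlinarith [mul_nonneg (sub_nonneg.2 hp) (sub_nonneg.2 hk2),
          mul_nonneg hRpos.le hk1.le]
      calc ‖Complex.exp (p * ΛN) * (((if i = j then 1 else 0) : ℂ)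
            - ∑ k, (A k i j : ℂ) * Complex.exp (-(p * Λ k))
            - ∫ s in Set.Icc (0:ℝ) ΛN, (g s i j : ℂ) * Complex.exp (-(p * s)))‖
          = ‖Complex.exp (p * ΛN)‖ * ‖(((if i = j then 1 else 0) : ℂ)
            - ∑ k, (A k i j : ℂ) * Complex.exp (-(p * Λ k))
            - ∫ s in Set.Icc (0:ℝ) ΛN, (g s i j : ℂ) * Complex.exp (-(p * s)))‖ := norm_mul _ _
        _ ≤ Real.exp (p.re * ΛN) * (1 + (∑ k, Ka k * Real.exp (-(p.re * Λ k)))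
            + ∫ s in Set.Icc (0:ℝ) ΛN, C * Real.exp (-(p.re * s))) := by
            rw [hcnorm]
            apply mul_le_mul_of_nonneg_left ?_ (Real.exp_pos _).le
            have hd1 : ‖((if i = j then 1 else 0) : ℂ)‖ ≤ 1 := by split <;> simp
            calc ‖(((if i = j then 1 else 0) : ℂ)
                - ∑ k, (A k i j : ℂ) * Complex.exp (-(p * Λ k))
                - ∫ s in Set.Icc (0:ℝ) ΛN, (g s i j : ℂ) * Complex.exp (-(p * s)))‖
                ≤ ‖(((if i = j then 1 else 0) : ℂ)
                  - ∑ k, (A k i j : ℂ) * Complex.exp (-(p * Λ k)))‖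
                  + ‖∫ s in Set.Icc (0:ℝ) ΛN, (g s i j : ℂ) * Complex.exp (-(p * s))‖ :=
                  norm_sub_le _ _
              _ ≤ _ := by
                  have := norm_sub_le ((if i = j then 1 else 0) : ℂ)
                    (∑ k, (A k i j : ℂ) * Complex.exp (-(p * Λ k)))
                  linarith [hS, hI, hd1]
        _ = Real.exp (p.re * ΛN) + Real.exp (p.re * ΛN) * (∑ k, Ka k * Real.exp (-(p.re * Λ k)))
            + Real.exp (p.re * ΛN) * ∫ s in Set.Icc (0:ℝ) ΛN, C * Real.exp (-(p.re * s)) := by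
            ring
        _ ≤ Real.exp (R * ΛN) + (∑ k, Ka k) * Real.exp (R * ΛN)
            + C * ΛN * Real.exp (R * ΛN) := by
            have hstep : Real.exp (p.re * ΛN) ≤ Real.exp (R * ΛN) := by
              apply Real.exp_le_exp.mpr
              nlinarith
            linarith [hSb, hIb]
        _ = M₀ := by rw [hM₀]; ring
    set Sset : Set (Matrix (Fin d) (Fin d) ℂ) := closure (Qhat '' {p : ℂ | p.re ≤ R}) with hSset
    have hSsub : Sset ⊆ closure (Set.range Qhat) :=
      closure_mono (Set.image_subset_range _ _)
    have hScomp : IsCompact Sset := by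
      apply Metric.isCompact_of_isClosed_isBounded isClosed_closure
      apply Bornology.IsBounded.closure
      apply (isBounded_iff_forall_norm_le).2
      refine ⟨(d:ℝ) * M₀, ?_⟩
      rintro F ⟨p, hp, rfl⟩
      exact hbdd p hp
    have hposS : ∀ F ∈ Sset, ∀ v : Fin d → ℂ, ‖v‖ = 1 →
        0 < ‖Matrix.vecMul v F‖ + ‖Matrix.vecMul v B'‖ := by
      intro F hF v hv
      rcases lt_or_ge 0 (‖Matrix.vecMul v F‖ + ‖Matrix.vecMul v B'‖) with h | h
      · exact h
      exfalso
      have hn1 := norm_nonneg (Matrix.vecMul v F)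
      have hn2 := norm_nonneg (Matrix.vecMul v B')
      have h1 : Matrix.vecMul v F = 0 := norm_eq_zero.mp (by linarith)
      have h2 : Matrix.vecMul v B' = 0 := norm_eq_zero.mp (by linarith)
      have hv0 := left_kernel_triv F B' (hrank F (hSsub hF)) v h1 h2
      rw [hv0] at hv
      simp at hv
    obtain ⟨α₀, hα₀, hminS⟩ := exists_min_on_compact hd B' Sset hScomp hposS
    refine ⟨min α₀ (1/2), lt_min hα₀ (by norm_num), fun p v hv => ?_⟩
    rcases le_total p.re R with hp | hp
    · exact le_trans (min_le_left _ _)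
        (hminS (Qhat p) (subset_closure ⟨p, hp, rfl⟩) v hv)
    · have h := hlow p hp v hv
      have h2 := norm_nonneg (Matrix.vecMul v B')
      calc min α₀ (1/2) ≤ 1/2 := min_le_right _ _
        _ ≤ ‖Matrix.vecMul v (Qhat p)‖ := h
        _ ≤ _ := le_add_of_nonneg_right h2

end
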